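/- arXiv:1306.1224 — 5 statements merged into one kernel-verified Lean document; each statement's English description precedes it below -/
import Mathlib

section
/- Let X_1, ..., X_{r+1} be independent identically distributed real random variables, all of whose odd moments vanish (E[X_i^{2k+1}] = 0 for all k ∈ ℕ) and whose moments of all orders exist. Then for n ≥ 1, E[(X_1 + ⋯ + X_{r+1})^{2n}] = ((r+1)/n) · Σ_{k=1}^{n} C(2n, 2k) · k · E[X_1^{2k}] · E[(X_2 + ⋯ + X_{r+1})^{2n−2k}]. -/
/-!
Write `S = X₀ + T` with `T` the sum of the other variables. Since `S ^ (2n) = ∑ᵢ Xᵢ S ^ (2n - 1)`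
and the family is exchangeable, `E[S ^ (2n)] = (r + 1) E[X₀ S ^ (2n - 1)]`. Expanding
`(X₀ + T) ^ (2n - 1)` binomially and using independence of `X₀` and `T`, the terms with an odd
power of `X₀` vanish, and `n * C(2n - 1, 2k - 1) = k * C(2n, 2k)` gives the stated sum.
-/

open MeasureTheory ProbabilityTheory Finset

theorem Nat.mul_choose_two_mul_sub_one (n k : ℕ) :
    n * (2 * n - 1).choose (2 * k + 1) = (2 * n).choose (2 * (k + 1)) * (k + 1) := by
  cases n with
  | zero => simp [Nat.choose_eq_zero_of_lt]
  | succ n =>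
    have h := Nat.add_one_mul_choose_eq (2 * n + 1) (2 * k + 1)
    rw [show 2 * (n + 1) - 1 = 2 * n + 1 by omega, show 2 * (n + 1) = 2 * n + 1 + 1 by ring,
      show 2 * (k + 1) = 2 * k + 1 + 1 by ring]
    linarith

theorem Finset.sum_range_two_mul_of_even_eq_zero {M : Type*} [AddCommMonoid M] (f : ℕ → M)
    (hf : ∀ k, f (2 * k) = 0) (n : ℕ) :
    ∑ j ∈ range (2 * n), f j = ∑ k ∈ range n, f (2 * k + 1) := by
  induction n with
  | zero => simp
  | succ n ih => rw [Nat.mul_succ, sum_range_succ, sum_range_succ, ih, hf, add_zero, sum_range_succ]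

theorem mul_sum_choose_eq_sum_Icc_of_odd_eq_zero (M N : ℕ → ℝ) (hM : ∀ k, M (2 * k + 1) = 0)
    (n : ℕ) :
    (n : ℝ) * ∑ j ∈ range (2 * n), ((2 * n - 1).choose j : ℝ) * (M (j + 1) * N (2 * n - 1 - j)) =
      ∑ k ∈ Icc 1 n, ((2 * n).choose (2 * k) : ℝ) * k * M (2 * k) * N (2 * n - 2 * k) := by
  rw [sum_range_two_mul_of_even_eq_zero _ (fun k => by rw [hM, zero_mul, mul_zero]),
    ← Ico_add_one_right_eq_Icc, sum_Ico_eq_sum_range, add_tsub_cancel_right, mul_sum]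
  refine sum_congr rfl fun k _ => ?_
  have hchoose : (n : ℝ) * ((2 * n - 1).choose (2 * k + 1) : ℝ) =
      ((2 * n).choose (2 * (k + 1)) : ℝ) * (k + 1 : ℕ) := by
    exact_mod_cast Nat.mul_choose_two_mul_sub_one n k
  rw [add_comm 1 k, show 2 * n - 1 - (2 * k + 1) = 2 * n - 2 * (k + 1) by omega]
  linear_combination M (2 * (k + 1)) * N (2 * n - 2 * (k + 1)) * hchoose

def HasAllMoments {Ω : Type*} [MeasurableSpace Ω] (f : Ω → ℝ) (μ : Measure Ω) : Prop :=
  ∀ m : ℕ, Integrable (fun ω => f ω ^ m) μ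

namespace HasAllMoments

variable {Ω : Type*} [MeasurableSpace Ω] {μ : Measure Ω} {f g : Ω → ℝ}

theorem aestronglyMeasurable (hf : HasAllMoments f μ) : AEStronglyMeasurable f μ := by
  simpa using (hf 1).aestronglyMeasurable

theorem memLp_pow_two (hf : HasAllMoments f μ) (a : ℕ) : MemLp (fun ω => f ω ^ a) 2 μ :=
  (memLp_two_iff_integrable_sq (hf a).aestronglyMeasurable).2 <| by
    simpa only [← pow_mul] using hf (a * 2)

theorem integrable_pow_mul_pow (hf : HasAllMoments f μ) (hg : HasAllMoments g μ) (a b : ℕ) :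
    Integrable (fun ω => f ω ^ a * g ω ^ b) μ :=
  (hf.memLp_pow_two a).integrable_mul (hg.memLp_pow_two b)

theorem add (hf : HasAllMoments f μ) (hg : HasAllMoments g μ) :
    HasAllMoments (fun ω => f ω + g ω) μ := fun m => by
  simp_rw [add_pow]
  exact integrable_finsetSum _ fun j _ => (hf.integrable_pow_mul_pow hg j (m - j)).mul_const _

end HasAllMoments

theorem hasAllMoments_finset_sum {Ω ι : Type*} [MeasurableSpace Ω] {μ : Measure Ω}
    [IsFiniteMeasure μ] {X : ι → Ω → ℝ} {s : Finset ι} (h : ∀ i ∈ s, HasAllMoments (X i) μ) :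
    HasAllMoments (fun ω => ∑ i ∈ s, X i ω) μ := by
  classical
  induction s using Finset.induction_on with
  | empty => simp [HasAllMoments]
  | insert i s hi ih =>
    simp_rw [sum_insert hi]
    exact (h i (mem_insert_self i s)).add (ih fun j hj => h j (mem_insert_of_mem hj))

namespace ProbabilityTheory

section Independent

variable {Ω : Type*} [MeasurableSpace Ω] {μ : Measure Ω} {f g : Ω → ℝ}

theorem IndepFun.integral_pow_mul_pow (h : IndepFun f g μ)
    (hf : AEStronglyMeasurable f μ) (hg : AEStronglyMeasurable g μ) (a b : ℕ) :
    ∫ ω, f ω ^ a * g ω ^ b ∂μ = (∫ ω, f ω ^ a ∂μ) * ∫ ω, g ω ^ b ∂μ :=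
  (h.comp (measurable_id.pow_const a) (measurable_id.pow_const b)).integral_fun_mul_eq_mul_integral
    (hf.pow a) (hg.pow b)

theorem IndepFun.integral_mul_add_pow (h : IndepFun f g μ) (hf : HasAllMoments f μ)
    (hg : HasAllMoments g μ) (m : ℕ) :
    ∫ ω, f ω * (f ω + g ω) ^ m ∂μ =
      ∑ j ∈ range (m + 1),
        (m.choose j : ℝ) * ((∫ ω, f ω ^ (j + 1) ∂μ) * ∫ ω, g ω ^ (m - j) ∂μ) := by
  have hexpand : ∀ ω, f ω * (f ω + g ω) ^ m =
      ∑ j ∈ range (m + 1), f ω ^ (j + 1) * g ω ^ (m - j) * (m.choose j : ℝ) := fun ω => by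
    rw [add_pow, mul_sum]
    exact sum_congr rfl fun j _ => by ring
  simp_rw [hexpand]
  rw [integral_finsetSum _ fun j _ => (hf.integrable_pow_mul_pow hg _ _).mul_const _]
  refine sum_congr rfl fun j _ => ?_
  rw [integral_mul_const, h.integral_pow_mul_pow hf.aestronglyMeasurable hg.aestronglyMeasurable,
    mul_comm]

end Independent

section Exchangeable

variable {Ω ι : Type*} [MeasurableSpace Ω] {μ : Measure Ω} [Fintype ι] {X : ι → Ω → ℝ}

theorem iIndepFun.identDistrib_perm (hindep : iIndepFun X μ)
    (hident : ∀ i j, IdentDistrib (X i) (X j) μ μ) (σ : Equiv.Perm ι) :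
    IdentDistrib (fun ω i => X (σ i) ω) (fun ω i => X i ω) μ μ :=
  IdentDistrib.pi (fun i => hident (σ i) i) (hindep.precomp σ.injective) hindep

theorem iIndepFun.integral_mul_pow_sum_eq [DecidableEq ι] (hindep : iIndepFun X μ)
    {i₀ : ι} (hident : ∀ i, IdentDistrib (X i) (X i₀) μ μ) (i : ι) (m : ℕ) :
    ∫ ω, X i ω * (∑ j, X j ω) ^ m ∂μ = ∫ ω, X i₀ ω * (∑ j, X j ω) ^ m ∂μ := by
  have hswap := (hindep.identDistrib_perm (fun i j => (hident i).trans (hident j).symm)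
    (Equiv.swap i₀ i)).comp (u := fun x => x i₀ * (∑ j, x j) ^ m) (by fun_prop)
  have hsum (ω : Ω) : ∑ j, X (Equiv.swap i₀ i j) ω = ∑ j, X j ω :=
    Equiv.sum_comp _ fun j => X j ω
  simpa [Function.comp_def, hsum] using hswap.integral_eq

theorem iIndepFun.integral_pow_sum_succ [IsFiniteMeasure μ] (hindep : iIndepFun X μ)
    {i₀ : ι} (hident : ∀ i, IdentDistrib (X i) (X i₀) μ μ) (hmom : ∀ i, HasAllMoments (X i) μ)
    (m : ℕ) :
    ∫ ω, (∑ i, X i ω) ^ (m + 1) ∂μ = Fintype.card ι * ∫ ω, X i₀ ω * (∑ i, X i ω) ^ m ∂μ := by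
  classical
  have hS := hasAllMoments_finset_sum fun i (_ : i ∈ univ) => hmom i
  simp_rw [pow_succ', sum_mul]
  rw [integral_finsetSum _ fun i _ => by simpa using (hmom i).integrable_pow_mul_pow hS 1 m]
  simp_rw [hindep.integral_mul_pow_sum_eq hident, sum_const, card_univ, nsmul_eq_mul]

end Exchangeable

end ProbabilityTheory

theorem even_moment_recurrence_general {Ω : Type*} [MeasurableSpace Ω] (μ : Measure Ω)
    [IsProbabilityMeasure μ] (r : ℕ) (X : Fin (r + 1) → Ω → ℝ)
    (hindep : iIndepFun X μ)
    (hident : ∀ i, IdentDistrib (X i) (X 0) μ μ)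
    (hmom : ∀ i (m : ℕ), Integrable (fun ω => X i ω ^ m) μ)
    (hodd : ∀ k : ℕ, ∫ ω, X 0 ω ^ (2 * k + 1) ∂μ = 0)
    (n : ℕ) (hn : 1 ≤ n) :
    ∫ ω, (∑ i, X i ω) ^ (2 * n) ∂μ =
      ((r + 1 : ℝ) / n) *
        ∑ k ∈ Finset.Icc 1 n,
          ((2 * n).choose (2 * k) : ℝ) * (k : ℝ) * (∫ ω, X 0 ω ^ (2 * k) ∂μ) *
            ∫ ω, (∑ i ∈ Finset.univ.erase 0, X i ω) ^ (2 * n - 2 * k) ∂μ := by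
  have hsplit (ω : Ω) : ∑ i, X i ω = X 0 ω + ∑ i ∈ univ.erase 0, X i ω :=
    (add_sum_erase _ _ (mem_univ 0)).symm
  have hindep_rest : IndepFun (X 0) (fun ω => ∑ i ∈ univ.erase 0, X i ω) μ := by
    simpa only [sum_fn] using (hindep.indepFun_finsetSum_of_notMem₀
      (fun i => (hident i).aemeasurable_fst) (notMem_erase 0 univ)).symm
  have hexpand (m : ℕ) : ∫ ω, (∑ i, X i ω) ^ (m + 1) ∂μ = (r + 1 : ℝ) *
      ∑ j ∈ range (m + 1), (m.choose j : ℝ) * ((∫ ω, X 0 ω ^ (j + 1) ∂μ) *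
        ∫ ω, (∑ i ∈ univ.erase 0, X i ω) ^ (m - j) ∂μ) := by
    rw [hindep.integral_pow_sum_succ hident hmom, Fintype.card_fin, Nat.cast_succ]
    simp_rw [hsplit]
    rw [hindep_rest.integral_mul_add_pow (hmom 0) (hasAllMoments_finset_sum fun i _ => hmom i)]
  have hpow := hexpand (2 * n - 1)
  rw [Nat.sub_add_cancel (by omega)] at hpow
  have hcomb := mul_sum_choose_eq_sum_Icc_of_odd_eq_zero (fun j => ∫ ω, X 0 ω ^ j ∂μ)
    (fun j => ∫ ω, (∑ i ∈ univ.erase 0, X i ω) ^ j ∂μ) hodd n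
  have hn0 : (n : ℝ) ≠ 0 := Nat.cast_ne_zero.mpr (by omega)
  rw [hpow, ← hcomb]
  field_simp

/-- Probabilistic version of Euler's identity: for i.i.d. random variables
`X₁,…,X_{r+1}` with all moments finite and vanishing odd moments,
`E[(X₁+⋯+X_{r+1})^{2n}] = ((r+1)/n) Σ_{k=1}^n C(2n,2k) k E[X₁^{2k}] E[(X₂+⋯+X_{r+1})^{2n-2k}]`. -/
theorem even_moment_recurrence {Ω : Type*} [MeasurableSpace Ω] (μ : Measure Ω)
    [IsProbabilityMeasure μ] (r : ℕ) (X : Fin (r + 1) → Ω → ℝ)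
    (hmeas : ∀ i, Measurable (X i))
    (hindep : iIndepFun X μ)
    (hident : ∀ i, IdentDistrib (X i) (X 0) μ μ)
    (hmom : ∀ i (m : ℕ), Integrable (fun ω => X i ω ^ m) μ)
    (hodd : ∀ k : ℕ, ∫ ω, X 0 ω ^ (2 * k + 1) ∂μ = 0)
    (n : ℕ) (hn : 1 ≤ n) :
    ∫ ω, (∑ i, X i ω) ^ (2 * n) ∂μ =
      ((r + 1 : ℝ) / n) *
        ∑ k ∈ Finset.Icc 1 n,
          ((2 * n).choose (2 * k) : ℝ) * (k : ℝ) * (∫ ω, X 0 ω ^ (2 * k) ∂μ) *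
            ∫ ω, (∑ i ∈ Finset.univ.erase 0, X i ω) ^ (2 * n - 2 * k) ∂μ :=
  even_moment_recurrence_general μ r X hindep hident hmom hodd n hn
end

section
/- Define the polynomials B_n^{(ν)}(r) by the recurrence B_0^{(ν)}(r) = 1 and B_n^{(ν)}(r+1) = Σ_{j=0}^{n} C(n,j) · (n+ν)! ν! / ((ν+j)! (n−j+ν)!) · B_j^{(ν)}(r) for r ∈ ℕ. Then for each n, r ↦ B_n^{(ν)}(r) agrees with a polynomial in r of degree n. -/
/-!
Since the diagonal coefficient of the recurrence is `1`, it says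
`B_n(r+1) - B_n(r) = Σ_{j<n} a_{nj} B_j(r)`. By strong induction on `n` the right-hand side is a
polynomial in `r` of degree `n - 1` (the coefficient `a_{n,n-1}` is nonzero), and a function on `ℕ`
vanishing at `0` whose forward difference is a polynomial of degree `d` is a polynomial of degree
`d + 1`: the falling factorials satisfy `Δ x^{(d+1)} = (d+1) x^{(d)}`, so a discrete antiderivative
is built by peeling off leading terms.
-/

open Finset Polynomial

namespace Polynomial

theorem descPochhammer_succ_eval_add_one {R : Type*} [CommRing R] (d : ℕ) (x : R) :
    (descPochhammer R (d + 1)).eval (x + 1) =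
      (descPochhammer R (d + 1)).eval x + (d + 1) * (descPochhammer R d).eval x := by
  have h : (descPochhammer R (d + 1)).eval (x + 1) = (x + 1) * (descPochhammer R d).eval x := by
    simp [descPochhammer_succ_left]
  rw [h, descPochhammer_succ_eval]
  ring

theorem degree_descPochhammer {R : Type*} [CommRing R] [Nontrivial R] [NoZeroDivisors R] (d : ℕ) :
    (descPochhammer R d).degree = d := by
  rw [degree_eq_natDegree (monic_descPochhammer R d).ne_zero, descPochhammer_natDegree]

theorem exists_eval_add_one_eq_eval_add {K : Type*} [Field K] [CharZero K] (q : K[X]) :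
    ∃ p : K[X], p.degree = q.degree + 1 ∧ p.eval 0 = 0 ∧
      ∀ x, p.eval (x + 1) = p.eval x + q.eval x := by
  induction q using degree_lt_wf.induction with
  | _ q ih =>
  by_cases hq : q = 0
  · exact ⟨0, by simp [hq], eval_zero, by simp [hq]⟩
  set d := q.natDegree
  set c := q.leadingCoeff
  have hc : c ≠ 0 := leadingCoeff_ne_zero.mpr hq
  have hd : (d : K) + 1 ≠ 0 := Nat.cast_add_one_ne_zero d
  have hlead : (C c * descPochhammer K d).degree = q.degree := by
    rw [degree_C_mul hc, degree_descPochhammer, degree_eq_natDegree hq]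
  have hlt : (q - C c * descPochhammer K d).degree < q.degree :=
    degree_sub_lt_left hlead.symm hq (by simp [c, (monic_descPochhammer K d).leadingCoeff])
  obtain ⟨p, hpdeg, hp0, hpeval⟩ := ih _ hlt
  refine ⟨C (c / (d + 1)) * descPochhammer K (d + 1) + p, ?_, ?_, fun x => ?_⟩
  · have htop : (C (c / (d + 1)) * descPochhammer K (d + 1)).degree = q.degree + 1 := by
      rw [degree_C_mul (div_ne_zero hc hd), degree_descPochhammer, degree_eq_natDegree hq]
      rfl
    have hlow : p.degree < (C (c / (d + 1)) * descPochhammer K (d + 1)).degree := by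
      rw [htop, hpdeg]
      exact WithBot.add_lt_add_right WithBot.one_ne_bot hlt
    rw [degree_add_eq_left_of_degree_lt hlow, htop]
  · simp [hp0]
  · have hsplit : q.eval x = c * (descPochhammer K d).eval x +
        (q - C c * descPochhammer K d).eval x := by simp
    rw [eval_add, eval_add, eval_mul, eval_mul, descPochhammer_succ_eval_add_one, hpeval, hsplit]
    simp only [eval_C]
    field_simp
    ring

theorem exists_eq_eval_natCast_of_eq_add_eval {K : Type*} [Field K] [CharZero K]
    (f : ℕ → K) (q : K[X]) (h0 : f 0 = 0) (hsucc : ∀ r, f (r + 1) = f r + q.eval (r : K)) :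
    ∃ p : K[X], p.degree = q.degree + 1 ∧ ∀ r : ℕ, f r = p.eval (r : K) := by
  obtain ⟨p, hpdeg, hp0, hpeval⟩ := exists_eval_add_one_eq_eval_add q
  refine ⟨p, hpdeg, fun r => ?_⟩
  induction r with
  | zero => simp [h0, hp0]
  | succ r ih => rw [hsucc, ih, Nat.cast_succ, hpeval]

theorem degree_sum_range_succ_eq {R : Type*} [Semiring R] (f : ℕ → R[X]) (m : ℕ)
    (hlt : ∀ j < m, (f j).degree < m) (hm : (f m).degree = m) :
    (∑ j ∈ range (m + 1), f j).degree = m := by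
  have hrest : (∑ j ∈ range m, f j).degree < (f m).degree := hm ▸ (degree_sum_le _ _).trans_lt
    ((Finset.sup_lt_iff (WithBot.bot_lt_coe m)).2 fun j hj => hlt j (mem_range.1 hj))
  rw [sum_range_succ, degree_add_eq_right_of_degree_lt hrest, hm]

theorem exists_eq_eval_natCast_of_unitriangular_rec {K : Type*} [Field K] [CharZero K]
    (a : ℕ → ℕ → K) (B : ℕ → ℕ → K) (hdiag : ∀ n, a n n = 1) (hsub : ∀ m, a (m + 1) m ≠ 0)
    (hB0 : ∀ r, B 0 r = 1) (hBinit : ∀ n, 1 ≤ n → B n 0 = 0)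
    (hrec : ∀ n r, B n (r + 1) = ∑ j ∈ range (n + 1), a n j * B j r) (n : ℕ) :
    ∃ p : K[X], p.degree = n ∧ ∀ r : ℕ, B n r = p.eval (r : K) := by
  induction n using Nat.strong_induction_on with
  | _ n ih =>
  cases n with
  | zero => exact ⟨C 1, by simp, fun r => by simp [hB0]⟩
  | succ m =>
  choose! p hpdeg hpeval using ih
  set q := ∑ j ∈ range (m + 1), a (m + 1) j • p j
  have hqdeg : q.degree = m := by
    refine degree_sum_range_succ_eq _ m (fun j hj => ?_) ?_
    · exact (degree_smul_le _ _).trans_lt (by rw [hpdeg j (by omega)]; exact_mod_cast hj)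
    · rw [← C_mul', degree_C_mul (hsub m), hpdeg m (by omega)]
  have hBsucc : ∀ r : ℕ, B (m + 1) (r + 1) = B (m + 1) r + q.eval (r : K) := by
    intro r
    rw [hrec, sum_range_succ, hdiag, one_mul, add_comm, eval_finsetSum]
    congr 1
    refine sum_congr rfl fun j hj => ?_
    rw [eval_smul, smul_eq_mul, hpeval j (by simp at hj; omega)]
  obtain ⟨P, hPdeg, hPeval⟩ :=
    exists_eq_eval_natCast_of_eq_add_eval _ q (hBinit _ le_add_self) hBsucc
  exact ⟨P, by rw [hPdeg, hqdeg]; rfl, hPeval⟩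

end Polynomial

/-- The coefficients `B_n^{(ν)}(r)`, defined by `B_0 = 1`, `B_n(0) = 0` for `n ≥ 1`,
and the recurrence `B_n(r+1) = Σ_j C(n,j) (n+ν)! ν! /((ν+j)!(n−j+ν)!) B_j(r)`,
agree with polynomials in `r` of degree `n`. -/
theorem B_is_polynomial (ν : ℕ) (B : ℕ → ℕ → ℝ)
    (hB0 : ∀ r, B 0 r = 1)
    (hBinit : ∀ n, 1 ≤ n → B n 0 = 0)
    (hrec : ∀ n r, B n (r + 1) =
      ∑ j ∈ Finset.range (n + 1),
        (n.choose j : ℝ) *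
          (((n + ν).factorial : ℝ) * (ν.factorial : ℝ) /
            (((ν + j).factorial : ℝ) * ((n - j + ν).factorial : ℝ))) * B j r)
    (n : ℕ) :
    ∃ p : Polynomial ℝ, p.degree = n ∧ ∀ r : ℕ, B n r = p.eval (r : ℝ) := by
  refine exists_eq_eval_natCast_of_unitriangular_rec _ B (fun n => ?_) (fun m => ?_)
    hB0 hBinit hrec n
  · rw [Nat.choose_self, Nat.sub_self, zero_add, add_comm ν n, Nat.cast_one, one_mul,
      div_self (by positivity)]
  · have : ((m + 1).choose m : ℝ) ≠ 0 := by exact_mod_cast (Nat.choose_pos m.le_succ).ne'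
    positivity
end

section
/- Let Ĩ_ν(z) = Σ_{k≥0} ν!/(k!(k+ν)!) (z/2)^{2k} be the normalized modified Bessel function with ν a nonnegative integer, and define a_n(r) = (−1)^{n−1}(n−1)! ζ_ν(2n) r, where ζ_ν(2n) are the coefficients in log Ĩ_ν(z) = Σ_{p≥1} ((−1)^{p+1}/p) ζ_ν(2p) z^{2p} (as formal power series). Then the coefficients B_n^{(ν)}(r) in Ĩ_ν(z)^r = Σ_{k≥0} ν!/(k!(k+ν)!) B_k^{(ν)}(r)(z/2)^{2k} satisfy B_n^{(ν)}(r) = 2^{2n} (n+ν)!/ν! · 𝔅_n(a_1(r),…,a_n(r)). -/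
/-!
In the variable `x = (z/2)²` the hypothesis says `Ĩ_ν = exp L` with `L = log Ĩ_ν`, where `exp L`
is the substitution of `L` into the exponential series. Since substitution is a ring
homomorphism and `(exp X)^r = exp (r X)`, we get `Ĩ_ν^r = exp (r L)`. Rescaling `x = t/4` turns
`r L` into `Σ_p a_p(r) t^p / p!`, whose exponential is `Σ_n 𝔅_n(a_1(r), …, a_n(r)) t^n / n!`;
comparing coefficients of `x^n` gives `B_n ν!/(n!(n+ν)!) = 4^n 𝔅_n / n!`.
-/

open Finset

/-- The normalized modified Bessel function `Ĩ_ν`, as a formal power series in the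
variable `x = (z/2)²`:  `Ĩ_ν(z) = Σ_k ν!/(k!(k+ν)!) x^k`. -/
noncomputable def besselItilde (ν : ℕ) : PowerSeries ℝ :=
  PowerSeries.mk fun k => (ν.factorial : ℝ) / (k.factorial * (k + ν).factorial)

namespace PowerSeries

variable {A : Type*} [CommRing A]

theorem coeff_pow_eq_zero_of_lt {F : A⟦X⟧} (hF : constantCoeff F = 0) {n j : ℕ} (h : n < j) :
    coeff n (F ^ j) = 0 :=
  X_pow_dvd_iff.1 (pow_dvd_pow_of_dvd (X_dvd_iff.2 hF) j) n h

theorem rescale_subst {R : Type*} [CommRing R] [Algebra R A] {G : A⟦X⟧} (hG : HasSubst G)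
    (a : A) (f : R⟦X⟧) : rescale a (f.subst G) = f.subst (rescale a G) := by
  rw [rescale_eq_subst, rescale_eq_subst, subst_comp_subst_apply hG (HasSubst.smul_X' a)]

variable [Algebra ℚ A]

theorem coeff_subst_exp {F : A⟦X⟧} (hF : constantCoeff F = 0) (n : ℕ) :
    coeff n ((exp A).subst F : A⟦X⟧) =
      ∑ j ∈ range (n + 1), algebraMap ℚ A (j.factorial : ℚ)⁻¹ * coeff n (F ^ j) := by
  rw [coeff_subst' (HasSubst.of_constantCoeff_zero' hF),
    finsum_eq_sum_of_support_subset (s := range (n + 1)) _ fun j hj => ?_]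
  · simp [coeff_exp]
  rw [coe_range, Set.mem_Iio, Nat.lt_succ_iff]
  by_contra! h
  exact hj (by simp only [coeff_pow_eq_zero_of_lt hF h, smul_zero])

theorem subst_exp_pow {F : A⟦X⟧} (hF : constantCoeff F = 0) (r : ℕ) :
    ((exp A).subst F) ^ r = (exp A).subst (r • F) := by
  have hF' := HasSubst.of_constantCoeff_zero' hF
  rw [← subst_pow hF', exp_pow_eq_rescale_exp, rescale_eq_subst,
    subst_comp_subst_apply (HasSubst.smul_X' _) hF', subst_smul hF', subst_X hF',
    Nat.cast_smul_eq_nsmul]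

end PowerSeries

/-- `log Ĩ_ν` in the variable `x = (z/2)²`. -/
noncomputable def logBesselItilde (zeta2 : ℕ → ℝ) : PowerSeries ℝ :=
  PowerSeries.mk fun p => if p = 0 then 0 else (-1) ^ (p + 1) / p * zeta2 p * 4 ^ p

/-- `Σ_p a_p(r) t^p / p!`, whose exponential has the complete Bell polynomials
`𝔅_n(a_1(r), …, a_n(r)) / n!` as coefficients. -/
noncomputable def bellArgumentSeries (zeta2 : ℕ → ℝ) (r : ℕ) : PowerSeries ℝ :=
  PowerSeries.mk fun p => if p = 0 then 0
    else ((p.factorial : ℝ))⁻¹ * ((-1) ^ (p - 1) * ((p - 1).factorial : ℝ) * zeta2 p * r)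

theorem constantCoeff_logBesselItilde (zeta2 : ℕ → ℝ) :
    PowerSeries.constantCoeff (logBesselItilde zeta2) = 0 := by
  simp [logBesselItilde, PowerSeries.constantCoeff_mk]

theorem constantCoeff_bellArgumentSeries (zeta2 : ℕ → ℝ) (r : ℕ) :
    PowerSeries.constantCoeff (bellArgumentSeries zeta2 r) = 0 := by
  simp [bellArgumentSeries, PowerSeries.constantCoeff_mk]

theorem rescale_four_bellArgumentSeries (zeta2 : ℕ → ℝ) (r : ℕ) :
    PowerSeries.rescale 4 (bellArgumentSeries zeta2 r) = r • logBesselItilde zeta2 := by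
  ext (_ | q)
  · simp [bellArgumentSeries, logBesselItilde]
  · rw [PowerSeries.coeff_rescale, map_nsmul, nsmul_eq_mul]
    simp only [bellArgumentSeries, logBesselItilde, PowerSeries.coeff_mk, Nat.add_one_ne_zero,
      if_false, Nat.add_sub_cancel, Nat.factorial_succ]
    push_cast
    field_simp
    ring

open PowerSeries in
/-- `B_n^{(ν)}(r) = 2^{2n} (n+ν)!/ν! · 𝔅_n(a_1(r),…,a_n(r))` where
`a_n(r) = (−1)^{n−1}(n−1)! ζ_ν(2n) r`, the `ζ_ν(2p)` being the coefficients of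
`log Ĩ_ν(z) = Σ_p ((−1)^{p+1}/p) ζ_ν(2p) z^{2p}` (so that in the variable `x = (z/2)²`,
`Ĩ_ν = exp(Σ_p ((−1)^{p+1}/p) ζ_ν(2p) 4^p x^p)`, the exponential of a series with zero
constant term being given coefficientwise by `coeff n (exp F) = Σ_j coeff n (F^j)/j!`),
`𝔅` the complete Bell polynomials, and `B_n^{(ν)}(r)` the coefficients in
`Ĩ_ν(z)^r = Σ_k ν!/(k!(k+ν)!) B_k^{(ν)}(r) (z/2)^{2k}`. -/
theorem B_eq_bell (ν : ℕ) (zeta2 : ℕ → ℝ)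
    (hlog : ∀ n, PowerSeries.coeff (R := ℝ) n (besselItilde ν) =
      ∑ j ∈ Finset.range (n + 1),
        ((j.factorial : ℝ))⁻¹ * PowerSeries.coeff (R := ℝ) n
          ((PowerSeries.mk fun p =>
            if p = 0 then (0 : ℝ) else (-1) ^ (p + 1) / p * zeta2 p * 4 ^ p) ^ j))
    (B : ℕ → ℕ → ℝ)
    (hB : ∀ r n, PowerSeries.coeff (R := ℝ) n ((besselItilde ν) ^ r) =
      (ν.factorial : ℝ) / (n.factorial * (n + ν).factorial) * B n r)
    (Bell : ℕ → ℕ → ℝ)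
    (hBell : ∀ r n, ((n.factorial : ℝ))⁻¹ * Bell r n =
      ∑ j ∈ Finset.range (n + 1),
        ((j.factorial : ℝ))⁻¹ * PowerSeries.coeff (R := ℝ) n
          ((PowerSeries.mk fun p =>
            if p = 0 then (0 : ℝ)
            else ((p.factorial : ℝ))⁻¹ *
              ((-1) ^ (p - 1) * ((p - 1).factorial : ℝ) * zeta2 p * r)) ^ j)) :
    ∀ n r : ℕ, B n r = 2 ^ (2 * n) * ((n + ν).factorial / ν.factorial : ℝ) * Bell r n := by
  intro n r
  have hI : besselItilde ν = (exp ℝ).subst (logBesselItilde zeta2) := by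
    ext m
    rw [hlog, coeff_subst_exp (constantCoeff_logBesselItilde zeta2)]
    simp [logBesselItilde]
  have key : coeff n (besselItilde ν ^ r) = 4 ^ n * ((n.factorial : ℝ)⁻¹ * Bell r n) := by
    rw [hI, subst_exp_pow (constantCoeff_logBesselItilde zeta2),
      ← rescale_four_bellArgumentSeries, ← rescale_subst (HasSubst.of_constantCoeff_zero'
        (constantCoeff_bellArgumentSeries zeta2 r)), coeff_rescale,
      coeff_subst_exp (constantCoeff_bellArgumentSeries zeta2 r), hBell]
    simp [bellArgumentSeries]
  rw [hB] at key
  rw [pow_mul, show (2 : ℝ) ^ 2 = 4 by norm_num]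
  field_simp at key ⊢
  linear_combination key
end

section
/- The polynomials B_n^{(ν)}(r) satisfy B_n^{(ν)}(r+1) = ((r+1)/n) Σ_{k=1}^{n} k C(n,k) (ν+1)_n/((ν+1)_k (ν+1)_{n−k}) B_{n−k}^{(ν)}(r) for all n ≥ 1. -/
open Finset

/-!
Differentiating `Ĩ_ν^{r+1}` gives `(Ĩ_ν^{r+1})' = (r+1) Ĩ_ν' Ĩ_ν^r`; comparing coefficients of
`x^{n-1}` expresses the `n`-th coefficient of `Ĩ_ν^{r+1}` through those of `Ĩ_ν^r`. Writing
`c_m = ν!/(m!(m+ν)!)` for the coefficients of `Ĩ_ν`, the weight `C(n,k) (ν+1)_n/((ν+1)_k (ν+1)_{n-k})`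
is exactly `c_k c_{n-k} / c_n`.
-/

namespace PowerSeries

theorem natCast_mul_coeff_pow_succ {R : Type*} [CommSemiring R] (f : R⟦X⟧)
    (r n : ℕ) :
    (n : R) * coeff n (f ^ (r + 1)) =
      ((r : R) + 1) * ∑ k ∈ Icc 1 n, (k : R) * coeff k f * coeff (n - k) (f ^ r) := by
  rcases n with _ | m
  · simp
  have hD : derivative R (f ^ (r + 1)) = (r + 1) • (derivative R f * f ^ r) := by
    simp [(derivative R).leibniz_pow, mul_comm]
  have hcoeff := congrArg (coeff m) hD
  rw [coeff_derivative, map_nsmul, coeff_mul, Nat.sum_antidiagonal_eq_sum_range_succ_mk]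
    at hcoeff
  rw [← Ico_add_one_right_eq_Icc, sum_Ico_eq_sum_range, mul_comm, Nat.add_sub_cancel,
    Nat.cast_succ, hcoeff, nsmul_eq_mul]
  push_cast
  refine congrArg _ (sum_congr rfl fun i _ => ?_)
  rw [coeff_derivative, add_comm 1 i, Nat.add_sub_add_right]
  ring

end PowerSeries

theorem ascPochhammer_eval_natCast_add_one {K : Type*} [Semifield K] [CharZero K] (ν m : ℕ) :
    (ascPochhammer K m).eval ((ν : K) + 1) = ((m + ν).factorial : K) / ν.factorial := by
  rw [eq_div_iff (Nat.cast_ne_zero.mpr ν.factorial_ne_zero), mul_comm, add_comm m]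
  exact_mod_cast factorial_mul_ascPochhammer K ν m

theorem coeff_besselItilde (ν k : ℕ) :
    PowerSeries.coeff k (besselItilde ν) =
      (ν.factorial : ℝ) / (k.factorial * (k + ν).factorial) :=
  PowerSeries.coeff_mk _ _

theorem coeff_besselItilde_ne_zero (ν k : ℕ) : PowerSeries.coeff k (besselItilde ν) ≠ 0 := by
  rw [coeff_besselItilde]
  exact div_ne_zero (by positivity) (by positivity)

theorem coeff_besselItilde_mul_coeff_div_coeff {ν k n : ℕ} (hk : k ≤ n) :
    PowerSeries.coeff k (besselItilde ν) * PowerSeries.coeff (n - k) (besselItilde ν) /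
        PowerSeries.coeff n (besselItilde ν) =
      n.choose k * ((ascPochhammer ℝ n).eval ((ν : ℝ) + 1) /
        ((ascPochhammer ℝ k).eval ((ν : ℝ) + 1) *
          (ascPochhammer ℝ (n - k)).eval ((ν : ℝ) + 1))) := by
  have hchoose : (n.choose k : ℝ) = n.factorial / (k.factorial * (n - k).factorial) := by
    rw [Nat.cast_choose ℝ hk]
  simp only [coeff_besselItilde, ascPochhammer_eval_natCast_add_one, hchoose]
  field_simp

/-- The coefficients `B_n^{(ν)}(r)` in `Ĩ_ν(z)^r = Σ_k ν!/(k!(k+ν)!) B_k^{(ν)}(r)(z/2)^{2k}`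
satisfy `B_n(r+1) = ((r+1)/n) Σ_{k=1}^n k C(n,k) (ν+1)_n/((ν+1)_k (ν+1)_{n−k}) B_{n−k}(r)`. -/
theorem B_recurrence_one (ν : ℕ) (B : ℕ → ℕ → ℝ)
    (hB : ∀ r n, PowerSeries.coeff n ((besselItilde ν) ^ r) =
      (ν.factorial : ℝ) / (n.factorial * (n + ν).factorial) * B n r)
    (r n : ℕ) (hn : 1 ≤ n) :
    B n (r + 1) =
      (((r : ℝ) + 1) / n) *
        ∑ k ∈ Finset.Icc 1 n,
          (k : ℝ) * (n.choose k : ℝ) *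
            (Polynomial.eval ((ν : ℝ) + 1) (ascPochhammer ℝ n) /
              (Polynomial.eval ((ν : ℝ) + 1) (ascPochhammer ℝ k) *
                Polynomial.eval ((ν : ℝ) + 1) (ascPochhammer ℝ (n - k)))) *
            B (n - k) r := by
  set I := besselItilde ν
  have hB' : ∀ s m, PowerSeries.coeff m (I ^ s) = PowerSeries.coeff m I * B m s := by
    simpa [I, coeff_besselItilde] using hB
  have hrec := PowerSeries.natCast_mul_coeff_pow_succ I r n
  simp only [hB'] at hrec
  have hn0 : (n : ℝ) ≠ 0 := Nat.cast_ne_zero.mpr (by omega)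
  have hcn : PowerSeries.coeff n I ≠ 0 := coeff_besselItilde_ne_zero ν n
  calc B n (r + 1)
      = n * (PowerSeries.coeff n I * B n (r + 1)) / (n * PowerSeries.coeff n I) := by
        field_simp
    _ = (r + 1) * (∑ k ∈ Icc 1 n, k * PowerSeries.coeff k I *
          (PowerSeries.coeff (n - k) I * B (n - k) r)) / (n * PowerSeries.coeff n I) := by
        rw [hrec]
    _ = _ := by
        rw [mul_sum, mul_sum, sum_div]
        refine sum_congr rfl fun k hk => ?_
        rw [mul_assoc (k : ℝ) (n.choose k : ℝ),
          ← coeff_besselItilde_mul_coeff_div_coeff (mem_Icc.1 hk).2]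
        ring
end

section
/- The polynomials B_n^{(ν)}(r) satisfy B_n^{(ν)}(r) = Σ_{k=1}^{n} (k(r+1)/n − 1) C(n,k) (ν+1)_n/((ν+1)_k (ν+1)_{n−k}) B_{n−k}^{(ν)}(r) for all n ≥ 1. -/
/-!
Write `f = Ĩ_ν = Σ a_k x^k` and `g = f^r = Σ c_k x^k`. The Euler operator
`θ = x d/dx` satisfies `f · θg = r · θf · g`; comparing coefficients of `x^n` gives
`Σ_{k=0}^n (k(r+1) - n) a_k c_{n-k} = 0` (J. C. P. Miller's recurrence), whose `k = 0` term is
`-n c_n`. Since `a_k = 1/(k! (ν+1)_k)` and `c_k = a_k B_k(r)`, dividing by `n a_n` gives the claim,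
as `a_k a_{n-k} / a_n = C(n,k) (ν+1)_n / ((ν+1)_k (ν+1)_{n-k})`.
-/

open Finset

theorem Finset.sum_range_succ_eq_add_sum_Icc {M : Type*} [AddCommMonoid M] (g : ℕ → M) (n : ℕ) :
    ∑ k ∈ range (n + 1), g k = g 0 + ∑ k ∈ Icc 1 n, g k := by
  rw [range_eq_Ico, sum_eq_sum_Ico_succ_bot (by omega), zero_add, Ico_add_one_right_eq_Icc]

namespace PowerSeries

variable {R : Type*} [CommRing R]

theorem coeff_X_mul_derivative (h : R⟦X⟧) (n : ℕ) :
    coeff n (X * derivative R h) = n * coeff n h := by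
  cases n with
  | zero => simp
  | succ m => rw [coeff_succ_X_mul, coeff_derivative, mul_comm]; push_cast; rfl

theorem mul_derivative_pow (f : R⟦X⟧) (r : ℕ) :
    f * derivative R (f ^ r) = r • (f ^ r * derivative R f) := by
  rw [Derivation.leibniz_pow]
  cases r with
  | zero => simp
  | succ s => simp only [smul_eq_mul, nsmul_eq_mul, Nat.add_sub_cancel]; ring

theorem coeff_pow_recurrence (f : R⟦X⟧) (r n : ℕ) :
    n * constantCoeff f * coeff n (f ^ r) =
      ∑ k ∈ Icc 1 n, ((k : R) * (r + 1) - n) * coeff k f * coeff (n - k) (f ^ r) := by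
  have h : f * (X * derivative R (f ^ r)) = r • ((X * derivative R f) * f ^ r) := by
    rw [mul_left_comm, mul_derivative_pow, mul_smul_comm, mul_comm (f ^ r), mul_assoc]
  replace h := congrArg (coeff n) h
  rw [map_nsmul, coeff_mul, coeff_mul, nsmul_eq_mul] at h
  simp only [Nat.sum_antidiagonal_eq_sum_range_succ_mk, coeff_X_mul_derivative] at h
  have hsum : ∑ k ∈ range (n + 1), ((k : R) * (r + 1) - n) * coeff k f * coeff (n - k) (f ^ r)
      = 0 := by
    calc _ = r * ∑ k ∈ range (n + 1), k * coeff k f * coeff (n - k) (f ^ r) -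
          ∑ k ∈ range (n + 1), coeff k f * ((n - k : ℕ) * coeff (n - k) (f ^ r)) := by
          rw [mul_sum, ← sum_sub_distrib]
          refine sum_congr rfl fun k hk => ?_
          rw [Nat.cast_sub (Nat.lt_succ_iff.mp (mem_range.mp hk))]
          ring
      _ = 0 := by rw [h, sub_self]
  rw [sum_range_succ_eq_add_sum_Icc, Nat.cast_zero, Nat.sub_zero,
    coeff_zero_eq_constantCoeff_apply] at hsum
  linear_combination -hsum

end PowerSeries

open Nat Polynomial PowerSeries

theorem coeff_besselItilde_s11 (ν k : ℕ) :
    coeff k (besselItilde ν) = ((k ! : ℝ) * (ascPochhammer ℝ k).eval (ν + 1 : ℝ))⁻¹ := by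
  have := factorial_ne_zero ν
  rw [besselItilde, coeff_mk, add_comm k, ← factorial_mul_ascPochhammer]
  field_simp

theorem constantCoeff_besselItilde (ν : ℕ) : constantCoeff (besselItilde ν) = 1 := by
  simp [← coeff_zero_eq_constantCoeff_apply, coeff_besselItilde_s11]

/-- The coefficients `B_n^{(ν)}(r)` in `Ĩ_ν(z)^r = Σ_k ν!/(k!(k+ν)!) B_k^{(ν)}(r)(z/2)^{2k}`
satisfy `B_n(r) = Σ_{k=1}^n (k(r+1)/n − 1) C(n,k) (ν+1)_n/((ν+1)_k (ν+1)_{n−k}) B_{n−k}(r)`. -/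
theorem B_recurrence_two (ν : ℕ) (B : ℕ → ℕ → ℝ)
    (hB : ∀ r n, PowerSeries.coeff (R := ℝ) n ((besselItilde ν) ^ r) =
      (ν.factorial : ℝ) / (n.factorial * (n + ν).factorial) * B n r)
    (r n : ℕ) (hn : 1 ≤ n) :
    B n r =
      ∑ k ∈ Finset.Icc 1 n,
        ((k : ℝ) * ((r : ℝ) + 1) / n - 1) * (n.choose k : ℝ) *
          (Polynomial.eval ((ν : ℝ) + 1) (ascPochhammer ℝ n) /
            (Polynomial.eval ((ν : ℝ) + 1) (ascPochhammer ℝ k) *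
              Polynomial.eval ((ν : ℝ) + 1) (ascPochhammer ℝ (n - k)))) *
          B (n - k) r := by
  have hc (j : ℕ) : coeff j (besselItilde ν ^ r) = coeff j (besselItilde ν) * B j r := by
    rw [hB, besselItilde, coeff_mk]
  have hrec := coeff_pow_recurrence (besselItilde ν) r n
  simp only [hc, coeff_besselItilde_s11, constantCoeff_besselItilde] at hrec
  have hP (j : ℕ) : 0 < (ascPochhammer ℝ j).eval (ν + 1 : ℝ) :=
    ascPochhammer_pos _ _ (by positivity)
  have hn0 : (n : ℝ) ≠ 0 := Nat.cast_ne_zero.mpr (by omega)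
  have := hP n
  calc B n r = (n ! * (ascPochhammer ℝ n).eval (ν + 1 : ℝ) / n) *
        (n * 1 * ((n ! * (ascPochhammer ℝ n).eval (ν + 1 : ℝ))⁻¹ * B n r)) := by
        field_simp
    _ = _ := by
      rw [hrec, mul_sum]
      refine sum_congr rfl fun k hk => ?_
      rw [cast_choose ℝ (mem_Icc.mp hk).2]
      have := hP k
      have := hP (n - k)
      field_simp
end
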